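/- Fix an odd prime p and let χ be the Legendre symbol modulo p, viewed as a complex-valued sequence on ℤ/pℤ. Then for all m, n ∈ ℤ/pℤ \ {0}, the number e^{-πi m̃ñ/p} · A_p(χ)[m,n] is real, where m̃, ñ ∈ {0,1,...,p-1} are the integer representatives of m and n. -/

import Mathlib

open scoped BigOperators Classical

noncomputable section

/-- The Legendre symbol modulo `p`, viewed as a complex-valued function on `ZMod p`:
`1` on nonzero quadratic residues, `0` at `0`, `-1` on quadratic nonresidues. -/
def chi (p : ℕ) (k : ZMod p) : ℂ :=
  if k = 0 then 0 else if ∃ m : ZMod p, m ^ 2 = k then 1 else -1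

/-- The Legendre symbol modulo `p`, viewed as an integer-valued function on `ZMod p`. -/
def chiZ (p : ℕ) (k : ZMod p) : ℤ :=
  if k = 0 then 0 else if ∃ m : ZMod p, m ^ 2 = k then 1 else -1

/-- The discrete periodic (narrow band) ambiguity function
`A_p(u)[m,n] = (1/p) ∑_k u[k+m] conj(u[k]) e^{-2πi k n/p}`. -/
def ambig (p : ℕ) [NeZero p] (u : ZMod p → ℂ) (m n : ZMod p) : ℂ :=
  (1 / (p : ℂ)) * ∑ k : ZMod p,
    u (k + m) * (starRingEnd ℂ) (u k) *
      Complex.exp (-2 * Real.pi * Complex.I * (k.val : ℂ) * (n.val : ℂ) / (p : ℂ))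

/-- The Kloosterman sum `K[a,b;p] = ∑_{x ∈ (ℤ/pℤ)ˣ} e^{2πi(ax + b x⁻¹)/p}`. -/
def kloost (p : ℕ) [NeZero p] (a b : ℤ) : ℂ :=
  ∑ x : (ZMod p)ˣ,
    Complex.exp (2 * Real.pi * Complex.I *
      ((((a : ZMod p) * (x : ZMod p) + (b : ZMod p) * ((x⁻¹ : (ZMod p)ˣ) : ZMod p)).val : ℂ))
        / (p : ℂ))

/-- The Björck sequence of length `p` for a prime `p ≡ 1 (mod 4)`:
`u[k] = exp(iθχ(k))` with `θ = arccos (1/(1+√p))`. -/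
def bjorck1 (p : ℕ) (k : ZMod p) : ℂ :=
  Complex.exp (Complex.I * (Real.arccos (1 / (1 + Real.sqrt p)) : ℂ) * chi p k)

/-- The Björck sequence of length `p` for a prime `p ≡ 3 (mod 4)`:
`u[k] = exp(iφ)` with `φ = arccos ((1-p)/(1+p))` if `k` is a quadratic nonresidue,
and `u[k] = 1` otherwise. -/
def bjorck3 (p : ℕ) (k : ZMod p) : ℂ :=
  if ∀ m : ZMod p, m ^ 2 ≠ k then
    Complex.exp (Complex.I * (Real.arccos ((1 - (p : ℝ)) / (1 + (p : ℝ))) : ℂ))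
  else 1

end

/-
The substitution k ↦ -k - m in the ambiguity sum swaps χ(k + m) and χ(k) (the sign χ(-1)
cancels since it occurs twice) and multiplies the additive character by e^{-2πi m̃ñ/p}. Hence
conj A = e^{-2πi m̃ñ/p} A, and multiplying by a square root of this unimodular number makes the
product real.
-/

open Complex ZMod
open scoped ComplexConjugate

lemma chi_eq_quadraticChar (p : ℕ) [Fact p.Prime] :
    chi p = (quadraticChar (ZMod p)).ringHomComp (Int.castRingHom ℂ) := by
  ext k
  simp only [chi, MulChar.ringHomComp_apply, quadraticChar_apply, quadraticCharFun, sq,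
    IsSquare, eq_comm (a := k)]
  split_ifs <;> simp

section

variable {N : ℕ} [NeZero N]

lemma stdAddChar_neg_mul_eq_exp (a b : ZMod N) :
    stdAddChar (-(a * b)) = exp (-2 * Real.pi * I * (a.val : ℂ) * (b.val : ℂ) / (N : ℂ)) := by
  have h : (-(a * b) : ZMod N) = ((-(a.val * b.val : ℤ) : ℤ) : ZMod N) := by
    push_cast; simp
  rw [h, stdAddChar_coe]
  congr 1
  push_cast
  ring

lemma ambig_eq_sum_stdAddChar (u : ZMod N → ℂ) (m n : ZMod N) :
    ambig N u m n = (1 / (N : ℂ)) * ∑ k, u (k + m) * conj (u k) * stdAddChar (-(k * n)) := by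
  simp only [ambig, stdAddChar_neg_mul_eq_exp]

lemma MulChar.conj_apply_neg_mul_apply_neg {R : Type*} [CommRing R] [Finite Rˣ]
    (χ : MulChar R ℂ) (a b : R) : conj (χ (-a)) * χ (-b) = conj (χ a) * χ b := by
  have h : χ⁻¹ (-1) * χ (-1) = 1 := by
    rw [← Pi.mul_apply, ← MulChar.coeToFun_mul, inv_mul_cancel, MulChar.one_apply isUnit_one.neg]
  rw [neg_eq_neg_one_mul a, neg_eq_neg_one_mul b, ← RCLike.star_def,
    MulChar.star_apply', MulChar.star_apply', map_mul, map_mul]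
  linear_combination (χ⁻¹ a * χ b) * h

lemma MulChar.conj_ambig (χ : MulChar (ZMod N) ℂ) (m n : ZMod N) :
    conj (ambig N χ m n) = stdAddChar (-(m * n)) * ambig N χ m n := by
  have hχ : ∀ k, conj (χ (-k - m + m)) * χ (-k - m) = χ (k + m) * conj (χ k) := by
    intro k
    rw [show -k - m + m = -k by ring, show -k - m = -(k + m) by ring,
      MulChar.conj_apply_neg_mul_apply_neg, mul_comm]
  have hsum : conj (∑ k, χ (k + m) * conj (χ k) * stdAddChar (-(k * n))) =
      stdAddChar (-(m * n)) * ∑ k, χ (k + m) * conj (χ k) * stdAddChar (-(k * n)) := by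
    rw [map_sum, Finset.mul_sum, ← ((Equiv.neg (ZMod N)).trans (Equiv.subRight m)).sum_comp]
    refine Finset.sum_congr rfl fun k _ => ?_
    simp only [Equiv.trans_apply, Equiv.neg_apply, Equiv.subRight_apply, map_mul, conj_conj,
      ← AddChar.map_neg_eq_conj, hχ]
    rw [mul_left_comm, ← AddChar.map_add_eq_mul]
    ring_nf
  rw [ambig_eq_sum_stdAddChar, map_mul, hsum]
  simp only [map_div₀, map_one, map_natCast]
  ring

lemma exp_neg_pi_I_val_mul_val_sq (a b : ZMod N) :
    exp (-(Real.pi : ℂ) * I * (a.val : ℂ) * (b.val : ℂ) / (N : ℂ)) ^ 2 =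
      stdAddChar (-(a * b)) := by
  rw [stdAddChar_neg_mul_eq_exp, ← exp_nat_mul]
  ring_nf

end

lemma conj_exp_mul_exp_of_re_eq_zero {x : ℂ} (hx : x.re = 0) : conj (exp x) * exp x = 1 := by
  rw [← exp_conj, ← exp_add, ← re_add_im x, hx]
  simp

lemma im_mul_eq_zero_of_conj_eq {z w : ℂ} (hz : conj z * z = 1) (hw : conj w = z ^ 2 * w) :
    (z * w).im = 0 := by
  rw [← conj_eq_iff_im, map_mul, hw]
  linear_combination (z * w) * hz

theorem legendre_ambiguity_real_general (p : ℕ) [hp : Fact p.Prime] (m n : ZMod p) :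
    (Complex.exp (-(Real.pi : ℂ) * Complex.I * (m.val : ℂ) * (n.val : ℂ) / (p : ℂ)) *
        ambig p (chi p) m n).im = 0 := by
  refine im_mul_eq_zero_of_conj_eq (conj_exp_mul_exp_of_re_eq_zero ?_) ?_
  · simp [-ZMod.natCast_val]
  · rw [exp_neg_pi_I_val_mul_val_sq, chi_eq_quadraticChar]
    exact MulChar.conj_ambig _ m n

theorem legendre_ambiguity_real (p : ℕ) [hp : Fact p.Prime] (hp2 : p ≠ 2)
    (m n : ZMod p) (hm : m ≠ 0) (hn : n ≠ 0) :
    (Complex.exp (-(Real.pi : ℂ) * Complex.I * (m.val : ℂ) * (n.val : ℂ) / (p : ℂ)) *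
        ambig p (chi p) m n).im = 0 :=
  legendre_ambiguity_real_general p (hp := hp) m n
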